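/- Let β ∈ ℂ with Re(β) > 0, ε > 0, k ∈ ℕ, and R > exp^∘k(0) with M_{ε,k}(R) < Re(β). Let D ⊆ ℂ satisfy Re(ζ) ≥ R for all ζ ∈ D, and let f : D → D satisfy |f(ζ) − (ζ + β)| ≤ M_{ε,k}(Re(ζ)) for all ζ ∈ D. Set ρ := Re(β) − M_{ε,k}(R). Then for every ζ ∈ D the limit φ(ζ) := lim_{n→∞} (f^∘n(ζ) − n·β) exists, and for every ν with 0 < ν < ε the series C_ν := Σ_{n=0}^{∞} M_{ν,k}(R + n·ρ) converges and |φ(ζ) − ζ| ≤ C_ν · (log^∘k(Re(ζ)))^{−(ε−ν)} for all ζ ∈ D. In particular, φ(ζ) − ζ → 0 uniformly on D as Re(ζ) → +∞. -/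

import Mathlib

open Filter Set

/-- `M_{ε,k}(x) = (∏_{j=0}^{k-1} log^∘j(x))⁻¹ · (log^∘k(x))^{-(1+ε)}`. -/
noncomputable def Mfun (ε : ℝ) (k : ℕ) (x : ℝ) : ℝ :=
  (∏ j ∈ Finset.range k, Real.log^[j] x)⁻¹ * (Real.log^[k] x) ^ (-(1 + ε))

/-!
Each application of `f` moves the real part to the right by at least
`ρ = Re β - M_{ε,k}(R)`, so the `n`-th increment `f(w) - (w + β)` of `f^[n] ζ - nβ`, taken at
`w = f^[n] ζ`, is at most `M_{ε,k}(Re w) ≤ M_{ν,k}(R + nρ) · (log^∘k(Re ζ))^{-(ε-ν)}`.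
Since `(log^∘k)^{-ν}` has derivative `-ν M_{ν,k}`, the mean value theorem bounds
`M_{ν,k}(R + (n+1)ρ)` by a telescoping difference, so `Σ M_{ν,k}(R + nρ)` converges.
Hence `f^[n] ζ - nβ` is Cauchy, and its limit lies within the sum of the increments from `ζ`.
-/

open Real

section IteratedLog

variable {k : ℕ} {x y : ℝ}

lemma pos_of_exp_iterate_succ_lt (hx : exp^[k + 1] 0 < x) : 0 < x := by
  rw [Function.iterate_succ_apply'] at hx
  exact (exp_pos _).trans hx

lemma exp_iterate_lt_log (hx : exp^[k + 1] 0 < x) : exp^[k] 0 < log x := by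
  rw [lt_log_iff_exp_lt (pos_of_exp_iterate_succ_lt hx), ← Function.iterate_succ_apply' exp]
  exact hx

lemma log_iterate_pos : ∀ {k : ℕ} {x : ℝ}, exp^[k] 0 < x → 0 < log^[k] x
  | 0, _, hx => hx
  | k + 1, _, hx => log_iterate_pos (k := k) (exp_iterate_lt_log hx)

lemma log_iterate_le_log_iterate :
    ∀ {k : ℕ} {x y : ℝ}, exp^[k] 0 < x → x ≤ y → log^[k] x ≤ log^[k] y
  | 0, _, _, _, hxy => hxy
  | k + 1, _, _, hx, hxy =>
    log_iterate_le_log_iterate (k := k) (exp_iterate_lt_log hx)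
      (log_le_log (pos_of_exp_iterate_succ_lt hx) hxy)

lemma tendsto_log_iterate_atTop (k : ℕ) : Tendsto (log^[k]) atTop atTop := by
  induction k with
  | zero => exact tendsto_id
  | succ k ih => exact ih.comp tendsto_log_atTop

noncomputable def logIterateProd (k : ℕ) (x : ℝ) : ℝ := ∏ j ∈ Finset.range k, log^[j] x

lemma logIterateProd_succ (k : ℕ) (x : ℝ) :
    logIterateProd (k + 1) x = logIterateProd k (log x) * x := by
  simp [logIterateProd, Finset.prod_range_succ', Function.iterate_succ_apply]

lemma logIterateProd_pos : ∀ {k : ℕ} {x : ℝ}, exp^[k] 0 < x → 0 < logIterateProd k x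
  | 0, _, _ => by simp [logIterateProd]
  | _ + 1, _, hx => by
    rw [logIterateProd_succ]
    exact mul_pos (logIterateProd_pos (exp_iterate_lt_log hx)) (pos_of_exp_iterate_succ_lt hx)

lemma logIterateProd_le_logIterateProd :
    ∀ {k : ℕ} {x y : ℝ}, exp^[k] 0 < x → x ≤ y →
      logIterateProd k x ≤ logIterateProd k y
  | 0, _, _, _, _ => le_rfl
  | _ + 1, _, _, hx, hxy => by
    have hlog := log_le_log (pos_of_exp_iterate_succ_lt hx) hxy
    rw [logIterateProd_succ, logIterateProd_succ]
    exact mul_le_mul (logIterateProd_le_logIterateProd (exp_iterate_lt_log hx) hlog) hxy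
      (pos_of_exp_iterate_succ_lt hx).le
      (logIterateProd_pos ((exp_iterate_lt_log hx).trans_le hlog)).le

lemma hasDerivAt_log_iterate :
    ∀ {k : ℕ} {x : ℝ}, exp^[k] 0 < x → HasDerivAt (log^[k]) (logIterateProd k x)⁻¹ x
  | 0, x, _ => by simpa [logIterateProd] using hasDerivAt_id x
  | _ + 1, x, hx => by
    rw [Function.iterate_succ, logIterateProd_succ, mul_inv]
    exact (hasDerivAt_log_iterate (exp_iterate_lt_log hx)).comp x
      (hasDerivAt_log (pos_of_exp_iterate_succ_lt hx).ne')

end IteratedLog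

section Mfun

variable {ε ν : ℝ} {k : ℕ} {x y : ℝ}

lemma Mfun_eq_logIterateProd (ε : ℝ) (k : ℕ) (x : ℝ) :
    Mfun ε k x = (logIterateProd k x)⁻¹ * (log^[k] x) ^ (-(1 + ε)) := rfl

lemma Mfun_pos (ε : ℝ) (hx : exp^[k] 0 < x) : 0 < Mfun ε k x :=
  mul_pos (inv_pos.2 (logIterateProd_pos hx)) (rpow_pos_of_pos (log_iterate_pos hx) _)

lemma Mfun_le_Mfun (hε : 0 ≤ ε) (hx : exp^[k] 0 < x) (hxy : x ≤ y) :
    Mfun ε k y ≤ Mfun ε k x :=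
  mul_le_mul (inv_anti₀ (logIterateProd_pos hx) (logIterateProd_le_logIterateProd hx hxy))
    (rpow_le_rpow_of_nonpos (log_iterate_pos hx) (log_iterate_le_log_iterate hx hxy)
      (by linarith))
    (rpow_nonneg (log_iterate_pos (hx.trans_le hxy)).le _)
    (inv_pos.2 (logIterateProd_pos hx)).le

lemma Mfun_eq_mul_rpow (ε ν : ℝ) (hx : exp^[k] 0 < x) :
    Mfun ε k x = Mfun ν k x * (log^[k] x) ^ (-(ε - ν)) := by
  rw [Mfun_eq_logIterateProd, Mfun_eq_logIterateProd, mul_assoc, ← rpow_add (log_iterate_pos hx)]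
  ring_nf

lemma Mfun_le_Mfun_mul_rpow {a b : ℝ} (hν : 0 ≤ ν) (hνε : ν ≤ ε) (ha : exp^[k] 0 < a)
    (hb : exp^[k] 0 < b) (hax : a ≤ x) (hbx : b ≤ x) :
    Mfun ε k x ≤ Mfun ν k a * (log^[k] b) ^ (-(ε - ν)) := by
  have hx := ha.trans_le hax
  rw [Mfun_eq_mul_rpow ε ν hx]
  exact mul_le_mul (Mfun_le_Mfun hν ha hax)
    (rpow_le_rpow_of_nonpos (log_iterate_pos hb) (log_iterate_le_log_iterate hb hbx)
      (by linarith))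
    (rpow_nonneg (log_iterate_pos hx).le _) (Mfun_pos ν ha).le

lemma hasDerivAt_log_iterate_rpow_neg (ν : ℝ) (hx : exp^[k] 0 < x) :
    HasDerivAt (fun y => (log^[k] y) ^ (-ν)) (-(ν * Mfun ν k x)) x := by
  convert (hasDerivAt_log_iterate hx).rpow_const (p := -ν) (Or.inl (log_iterate_pos hx).ne')
    using 1
  rw [Mfun_eq_logIterateProd, show -(1 + ν) = -ν - 1 by ring]
  ring

lemma mul_Mfun_le_sub {a b : ℝ} (hν : 0 ≤ ν) (ha : exp^[k] 0 < a) (hab : a < b) :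
    ν * ((b - a) * Mfun ν k b) ≤ (log^[k] a) ^ (-ν) - (log^[k] b) ^ (-ν) := by
  obtain ⟨c, hc, hslope⟩ := exists_hasDerivAt_eq_slope (fun y => (log^[k] y) ^ (-ν))
    (fun y => -(ν * Mfun ν k y)) hab
    (fun y hy =>
      (hasDerivAt_log_iterate_rpow_neg ν (ha.trans_le hy.1)).continuousAt.continuousWithinAt)
    (fun y hy => hasDerivAt_log_iterate_rpow_neg ν (ha.trans hy.1))
  have hcb : Mfun ν k b ≤ Mfun ν k c := Mfun_le_Mfun hν (ha.trans hc.1) hc.2.le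
  rw [eq_div_iff (sub_pos.2 hab).ne'] at hslope
  nlinarith [mul_nonneg (mul_nonneg hν (sub_pos.2 hab).le) (sub_nonneg.2 hcb)]

lemma summable_Mfun_add_mul {R ρ : ℝ} (hν : 0 < ν) (hR : exp^[k] 0 < R) (hρ : 0 < ρ) :
    Summable fun n : ℕ => Mfun ν k (R + n * ρ) := by
  set g : ℕ → ℝ := fun n => (log^[k] (R + n * ρ)) ^ (-ν)
  have hRn : ∀ n : ℕ, exp^[k] 0 < R + n * ρ := fun n =>
    hR.trans_le (le_add_of_nonneg_right (by positivity))
  have hstep : ∀ n : ℕ, Mfun ν k (R + (n + 1 : ℕ) * ρ) * (ν * ρ) ≤ g n - g (n + 1) := by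
    intro n
    have h := mul_Mfun_le_sub hν.le (hRn n)
      (show R + n * ρ < R + (n + 1 : ℕ) * ρ by push_cast; linarith)
    have hsub : R + (n + 1 : ℕ) * ρ - (R + n * ρ) = ρ := by push_cast; ring
    rw [hsub] at h
    linarith
  refine (summable_nat_add_iff 1).1 <| summable_of_sum_range_le (c := g 0 / (ν * ρ))
    (fun n => (Mfun_pos ν (hRn _)).le) fun N => ?_
  rw [le_div_iff₀ (by positivity), Finset.sum_mul]
  calc ∑ i ∈ Finset.range N, Mfun ν k (R + (i + 1 : ℕ) * ρ) * (ν * ρ)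
      ≤ ∑ i ∈ Finset.range N, (g i - g (i + 1)) := Finset.sum_le_sum fun i _ => hstep i
    _ = g 0 - g N := Finset.sum_range_sub' g N
    _ ≤ g 0 := sub_le_self _ (rpow_nonneg (log_iterate_pos (hRn N)).le _)

lemma tendsto_mul_log_iterate_rpow_neg (C : ℝ) {α : ℝ} (hα : 0 < α) (k : ℕ) :
    Tendsto (fun x => C * (log^[k] x) ^ (-α)) atTop (nhds 0) := by
  simpa using ((tendsto_rpow_neg_atTop hα).comp (tendsto_log_iterate_atTop k)).const_mul C

end Mfun

section Orbit

variable {D : Set ℂ} {f : ℂ → ℂ}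

lemma re_add_sub_le_re {w ζ β : ℂ} {m : ℝ} (h : ‖w - (ζ + β)‖ ≤ m) :
    ζ.re + (β.re - m) ≤ w.re := by
  have h' := (abs_le.1 ((Complex.abs_re_le_norm _).trans h)).1
  simp only [Complex.sub_re, Complex.add_re] at h'
  linarith

lemma re_add_mul_le_re_iterate {ρ : ℝ} (hf : MapsTo f D D)
    (hstep : ∀ ζ ∈ D, ζ.re + ρ ≤ (f ζ).re) {ζ : ℂ} (hζ : ζ ∈ D) (n : ℕ) :
    ζ.re + n * ρ ≤ (f^[n] ζ).re := by
  induction n with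
  | zero => simp
  | succ n ih =>
    rw [Function.iterate_succ_apply']
    push_cast
    linarith [hstep _ (hf.iterate n hζ)]

lemma dist_iterate_sub_nat_mul_succ (β ζ : ℂ) (n : ℕ) :
    dist (f^[n] ζ - n * β) (f^[n + 1] ζ - (n + 1 : ℕ) * β) =
      ‖f (f^[n] ζ) - (f^[n] ζ + β)‖ := by
  rw [dist_comm, dist_eq_norm, Function.iterate_succ_apply']
  push_cast
  ring_nf

end Orbit

theorem koenigs_limit_exists_with_logarithmic_estimate_general
    (β : ℂ) (ε : ℝ) (hε : 0 < ε) (k : ℕ)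
    (R : ℝ) (hR : Real.exp^[k] 0 < R) (hMR : Mfun ε k R < β.re)
    (D : Set ℂ) (hDre : ∀ ζ ∈ D, R ≤ ζ.re)
    (f : ℂ → ℂ) (hinv : Set.MapsTo f D D)
    (hbound : ∀ ζ ∈ D, ‖f ζ - (ζ + β)‖ ≤ Mfun ε k ζ.re) :
    ∃ φ : ℂ → ℂ,
      (∀ ζ ∈ D, Tendsto (fun n : ℕ => f^[n] ζ - (n : ℂ) * β) atTop (nhds (φ ζ))) ∧
      (∀ ν : ℝ, 0 < ν → ν < ε →
        ∃ Cν : ℝ, HasSum (fun n : ℕ => Mfun ν k (R + n * (β.re - Mfun ε k R))) Cν ∧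
          ∀ ζ ∈ D, ‖φ ζ - ζ‖ ≤ Cν * (Real.log^[k] ζ.re) ^ (-(ε - ν))) ∧
      (∀ δ > (0 : ℝ), ∃ R' : ℝ, ∀ ζ ∈ D, R' ≤ ζ.re → ‖φ ζ - ζ‖ ≤ δ) := by
  set ρ := β.re - Mfun ε k R with hρ_def
  have hρ : 0 < ρ := sub_pos.2 hMR
  have hstep : ∀ ζ ∈ D, ζ.re + ρ ≤ (f ζ).re := fun ζ hζ => by
    linarith [re_add_sub_le_re (hbound ζ hζ), Mfun_le_Mfun hε.le hR (hDre ζ hζ)]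
  have hincr : ∀ ν, 0 < ν → ν ≤ ε → ∀ ζ ∈ D, ∀ n : ℕ,
      dist (f^[n] ζ - n * β) (f^[n + 1] ζ - (n + 1 : ℕ) * β)
        ≤ Mfun ν k (R + n * ρ) * (log^[k] ζ.re) ^ (-(ε - ν)) := by
    intro ν hν hνε ζ hζ n
    have horbit := re_add_mul_le_re_iterate hinv hstep hζ n
    have hRζ := hDre ζ hζ
    have hnρ : 0 ≤ n * ρ := by positivity
    rw [dist_iterate_sub_nat_mul_succ]
    exact (hbound _ (hinv.iterate n hζ)).trans <| Mfun_le_Mfun_mul_rpow hν.le hνε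
      (hR.trans_le (by linarith)) (hR.trans_le hRζ) (by linarith) (by linarith)
  have hsum : ∀ ν, 0 < ν → Summable fun n : ℕ => Mfun ν k (R + n * ρ) :=
    fun ν hν => summable_Mfun_add_mul hν hR hρ
  have hcauchy : ∀ ζ ∈ D, CauchySeq fun n : ℕ => f^[n] ζ - n * β := fun ζ hζ =>
    cauchySeq_of_dist_le_of_summable _ (hincr (ε / 2) (half_pos hε) (half_le_self hε.le) ζ hζ)
      ((hsum _ (half_pos hε)).mul_right _)
  set φ := fun ζ => limUnder atTop fun n : ℕ => f^[n] ζ - n * β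
  have hest : ∀ ν, 0 < ν → ν ≤ ε → ∀ ζ ∈ D,
      ‖φ ζ - ζ‖ ≤
        (∑' n : ℕ, Mfun ν k (R + n * ρ)) * (log^[k] ζ.re) ^ (-(ε - ν)) := by
    intro ν hν hνε ζ hζ
    rw [← tsum_mul_right, ← dist_eq_norm']
    simpa using dist_le_tsum_of_dist_le_of_tendsto₀ _ (hincr ν hν hνε ζ hζ)
      ((hsum ν hν).mul_right _) (hcauchy ζ hζ).tendsto_limUnder
  refine ⟨φ, fun ζ hζ => (hcauchy ζ hζ).tendsto_limUnder,
    fun ν hν hνε => ⟨_, (hsum ν hν).hasSum, hest ν hν hνε.le⟩, fun δ hδ => ?_⟩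
  obtain ⟨R', hR'⟩ := eventually_atTop.1 <|
    (tendsto_mul_log_iterate_rpow_neg (∑' n : ℕ, Mfun (ε / 2) k (R + n * ρ))
      (show 0 < ε - ε / 2 by linarith) k).eventually (eventually_le_nhds hδ)
  exact ⟨R', fun ζ hζ hζR =>
    (hest (ε / 2) (half_pos hε) (half_le_self hε.le) ζ hζ).trans (hR' _ hζR)⟩

theorem koenigs_limit_exists_with_logarithmic_estimate
    (β : ℂ) (hβ : 0 < β.re) (ε : ℝ) (hε : 0 < ε) (k : ℕ)
    (R : ℝ) (hR : Real.exp^[k] 0 < R) (hMR : Mfun ε k R < β.re)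
    (D : Set ℂ) (hDre : ∀ ζ ∈ D, R ≤ ζ.re)
    (f : ℂ → ℂ) (hinv : Set.MapsTo f D D)
    (hbound : ∀ ζ ∈ D, ‖f ζ - (ζ + β)‖ ≤ Mfun ε k ζ.re) :
    ∃ φ : ℂ → ℂ,
      (∀ ζ ∈ D, Tendsto (fun n : ℕ => f^[n] ζ - (n : ℂ) * β) atTop (nhds (φ ζ))) ∧
      (∀ ν : ℝ, 0 < ν → ν < ε →
        ∃ Cν : ℝ, HasSum (fun n : ℕ => Mfun ν k (R + n * (β.re - Mfun ε k R))) Cν ∧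
          ∀ ζ ∈ D, ‖φ ζ - ζ‖ ≤ Cν * (Real.log^[k] ζ.re) ^ (-(ε - ν))) ∧
      (∀ δ > (0 : ℝ), ∃ R' : ℝ, ∀ ζ ∈ D, R' ≤ ζ.re → ‖φ ζ - ζ‖ ≤ δ) :=
  koenigs_limit_exists_with_logarithmic_estimate_general β ε hε k R hR hMR D hDre f hinv hbound
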